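/- arXiv:math/0501196 — 3 statements merged into one kernel-verified Lean document; each statement's English description precedes it below -/
import Mathlib

section
/- The natural map π : ℝP^{2n-1} → ℂP^{n-1}, induced by sending a nonzero vector in ℂ^n (up to real scalar) to its complex line, admits no continuous section when n ≥ 2. -/
/-!
A continuous section `s` picks, continuously in `v ∈ ℂⁿ ∖ 0`, a real line `ℝw ⊂ ℂv`. The number
`⟨v, w⟩² / ‖w‖²` does not depend on the choice of `w` in that line, is nonzero, depends
continuously on `v`, and is multiplied by `z̄²` when `v` is replaced by `z v`. On the circle
`z ↦ z eᵢ` it therefore winds `-2` times around the origin. But for `n ≥ 2` this circle is the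
restriction of `z ↦ z eᵢ + (1 - |z|²) eⱼ`, a map `ℂ → ℂⁿ ∖ 0`, and a nonvanishing continuous
function on the simply connected plane has a continuous logarithm, so it winds `0` times.
-/

open Projectivization

noncomputable instance (n : ℕ) :
    TopologicalSpace (Projectivization ℝ (Fin n → ℂ)) :=
  inferInstanceAs (TopologicalSpace (Quotient (projectivizationSetoid ℝ (Fin n → ℂ))))

noncomputable instance (n : ℕ) :
    TopologicalSpace (Projectivization ℂ (Fin n → ℂ)) :=
  inferInstanceAs (TopologicalSpace (Quotient (projectivizationSetoid ℂ (Fin n → ℂ))))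

open Complex Matrix
open scoped LinearAlgebra.Projectivization ComplexOrder

theorem Complex.winding_eq_zero_of_continuous {G : ℂ → ℂ} (hG : Continuous G)
    (hG0 : ∀ z, G z ≠ 0) {k : ℝ}
    (hcirc : ∀ τ : ℝ, G (exp (τ * I)) = exp (k * τ * I) * G 1) : k = 0 := by
  let G' : C(ℂ, {z : ℂ // z ≠ 0}) := ⟨fun z => ⟨G z, hG0 z⟩, hG.subtype_mk _⟩
  obtain ⟨θ, ⟨-, hθ⟩, -⟩ := isCoveringMap_exp.existsUnique_continuousMap_lifts G' 1 (log (G 1))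
    (Subtype.ext (exp_log (hG0 1)))
  have hexpθ (z : ℂ) : exp (θ z) = G z := congrArg Subtype.val (congrFun hθ z)
  have hlift : (fun τ : ℝ => θ (exp (τ * I))) = fun τ : ℝ => k * τ * I + θ 1 := by
    refine isCoveringMap_exp.eq_of_comp_eq (by fun_prop) (by fun_prop) ?_ (0 : ℝ) (by simp)
    ext τ : 2
    simp only [Function.comp_apply, hexpθ, exp_add, hcirc]
  have h2π := congrFun hlift (2 * Real.pi)
  simp only [ofReal_mul, ofReal_ofNat, exp_two_pi_mul_I] at h2π
  simpa using h2π

namespace Projectivization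

variable {ι : Type*}

noncomputable def toComplexLine : ℙ ℝ (ι → ℂ) → ℙ ℂ (ι → ℂ) :=
  Projectivization.lift (fun w => mk ℂ w.1 w.2) fun a b t h => by
    rw [mk_eq_mk_iff']
    exact ⟨t, by rw [h, Complex.coe_smul]⟩

variable [Fintype ι]

noncomputable def realLineTensor : ℙ ℝ (ι → ℂ) → Matrix ι ι ℂ :=
  Projectivization.lift (fun w => (‖w.1‖ ^ 2)⁻¹ • vecMulVec w.1 w.1) fun a b t h => by
    have ht : t ≠ 0 := by rintro rfl; exact a.2 (by simpa using h)
    simp only [h, norm_smul, vecMulVec_smul, smul_vecMulVec, smul_smul, Real.norm_eq_abs, mul_pow,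
      sq_abs]
    congr 1
    field_simp

theorem realLineTensor_mk (w : ι → ℂ) (hw : w ≠ 0) :
    realLineTensor (mk ℝ w hw) = (‖w‖ ^ 2)⁻¹ • vecMulVec w w := rfl

theorem continuous_realLineTensor {n : ℕ} : Continuous (realLineTensor (ι := Fin n)) :=
  continuous_quot_lift _ <|
    ((continuous_subtype_val.norm.pow 2).inv₀ fun w => by simp [w.2]).smul (by fun_prop)

theorem vecMul_realLineTensor_mk_dotProduct (v w : ι → ℂ) (hw : w ≠ 0) :
    (v ᵥ* realLineTensor (mk ℝ w hw)) ⬝ᵥ v = (‖w‖ ^ 2)⁻¹ • (v ⬝ᵥ w) ^ 2 := by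
  rw [realLineTensor_mk, vecMul_smul, vecMul_vecMulVec, smul_dotProduct, smul_dotProduct,
    dotProduct_comm w, smul_eq_mul, ← sq]

theorem vecMul_realLineTensor_dotProduct_ne_zero {v : ι → ℂ} (hv : v ≠ 0) {ℓ : ℙ ℝ (ι → ℂ)}
    (hℓ : toComplexLine ℓ = mk ℂ v hv) : (star v ᵥ* realLineTensor ℓ) ⬝ᵥ star v ≠ 0 := by
  induction ℓ using Projectivization.ind with | h w hw => ?_
  obtain ⟨a, rfl⟩ := (mk_eq_mk_iff' ℂ w v hw hv).mp hℓ
  have ha : a ≠ 0 := by rintro rfl; simp at hw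
  rw [vecMul_realLineTensor_mk_dotProduct, dotProduct_smul]
  simp [ha, hv]

end Projectivization

section SectionPhase

variable {ι : Type*} [Fintype ι]

/-- For `s [v] = [w]` this is `⟨v, w⟩² / ‖w‖²`. -/
noncomputable def sectionPhase (s : ℙ ℂ (ι → ℂ) → ℙ ℝ (ι → ℂ)) (v : {v : ι → ℂ // v ≠ 0}) : ℂ :=
  (star v.1 ᵥ* realLineTensor (s (mk' ℂ v))) ⬝ᵥ star v.1

theorem continuous_sectionPhase {n : ℕ} {s : ℙ ℂ (Fin n → ℂ) → ℙ ℝ (Fin n → ℂ)}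
    (hs : Continuous s) : Continuous (sectionPhase s) := by
  have : Continuous fun v => realLineTensor (s (mk' ℂ v)) :=
    continuous_realLineTensor.comp (hs.comp continuous_quot_mk)
  unfold sectionPhase
  fun_prop

theorem sectionPhase_ne_zero {s : ℙ ℂ (ι → ℂ) → ℙ ℝ (ι → ℂ)}
    (hs : ∀ x, toComplexLine (s x) = x) (v : {v : ι → ℂ // v ≠ 0}) : sectionPhase s v ≠ 0 :=
  vecMul_realLineTensor_dotProduct_ne_zero v.2 (hs _)

theorem sectionPhase_smul (s : ℙ ℂ (ι → ℂ) → ℙ ℝ (ι → ℂ)) (v : {v : ι → ℂ // v ≠ 0}) {z : ℂ}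
    (hz : z ≠ 0) :
    sectionPhase s ⟨z • v.1, smul_ne_zero hz v.2⟩ = star z ^ 2 * sectionPhase s v := by
  have : mk' ℂ ⟨z • v.1, smul_ne_zero hz v.2⟩ = mk' ℂ v :=
    (mk_eq_mk_iff' ℂ _ _ _ v.2).mpr ⟨z, rfl⟩
  simp only [sectionPhase, this, star_smul, smul_vecMul, smul_dotProduct, dotProduct_smul,
    smul_eq_mul]
  ring

end SectionPhase

section CircleCap

variable {ι : Type*} [DecidableEq ι]

noncomputable def circleCap (i j : ι) (z : ℂ) : ι → ℂ :=
  z • Pi.single i 1 + ((1 - ‖z‖ ^ 2 : ℝ) : ℂ) • Pi.single j 1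

theorem continuous_circleCap (i j : ι) : Continuous (circleCap i j) := by
  unfold circleCap
  fun_prop

theorem circleCap_ne_zero {i j : ι} (hij : i ≠ j) (z : ℂ) : circleCap i j z ≠ 0 := by
  intro h
  have hi := congrFun h i
  have hj := congrFun h j
  simp only [circleCap, Pi.add_apply, Pi.smul_apply, Pi.single_eq_same, Pi.single_eq_of_ne hij,
    Pi.single_eq_of_ne hij.symm, smul_eq_mul, mul_one, mul_zero, add_zero, zero_add] at hi hj
  simp [hi] at hj

theorem circleCap_of_norm_eq_one (i j : ι) {z : ℂ} (hz : ‖z‖ = 1) :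
    circleCap i j z = z • Pi.single i 1 := by
  simp [circleCap, hz]

end CircleCap

/-- The natural map `π : ℝP^{2n-1} → ℂP^{n-1}`, sending the real line through a nonzero
vector `v ∈ ℂⁿ` to the complex line through `v`, admits no continuous section
when `n ≥ 2`. -/
theorem stmt_0 (n : ℕ) (hn : 2 ≤ n)
    (pr : Projectivization ℝ (Fin n → ℂ) → Projectivization ℂ (Fin n → ℂ))
    (hpr : ∀ (v : Fin n → ℂ) (hv : v ≠ 0),
      pr (Projectivization.mk ℝ v hv) = Projectivization.mk ℂ v hv)
    (s : Projectivization ℂ (Fin n → ℂ) → Projectivization ℝ (Fin n → ℂ))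
    (hs : Continuous s) :
    ¬ ∀ x, pr (s x) = x := by
  intro hsec
  obtain rfl : pr = toComplexLine := funext (Projectivization.ind hpr)
  obtain ⟨i, j, hij⟩ := (Fin.nontrivial_iff_two_le.mpr hn).exists_pair_ne
  let e : {v : Fin n → ℂ // v ≠ 0} := ⟨Pi.single i 1, by simp⟩
  let cap (z : ℂ) : {v : Fin n → ℂ // v ≠ 0} := ⟨circleCap i j z, circleCap_ne_zero hij z⟩
  have hcap (τ : ℝ) : cap (exp (τ * I)) = ⟨exp (τ * I) • e.1, smul_ne_zero (exp_ne_zero _) e.2⟩ :=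
    Subtype.ext (circleCap_of_norm_eq_one _ _ (by simp))
  have hcap1 : cap 1 = e := Subtype.ext (by simpa using circleCap_of_norm_eq_one i j norm_one)
  have hstar (τ : ℝ) : star (exp (τ * I)) ^ 2 = exp ((-2 : ℝ) * τ * I) := by
    rw [← starRingEnd_apply, ← Complex.exp_conj, ← exp_nat_mul]
    congr 1
    simp
    ring
  have hwinding : (-2 : ℝ) = 0 := by
    refine winding_eq_zero_of_continuous (G := sectionPhase s ∘ cap)
      ((continuous_sectionPhase hs).comp ((continuous_circleCap i j).subtype_mk _))
      (fun z => sectionPhase_ne_zero hsec _) fun τ => ?_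
    simp only [Function.comp_apply, hcap, hcap1]
    rw [sectionPhase_smul s e (exp_ne_zero _), hstar]
  norm_num at hwinding
end

section
/- For n ≥ 2, the Hopf map h : S^{2n-1} → ℂP^{n-1}, sending a unit vector u ∈ ℂ^n to the complex one-dimensional subspace containing u, admits no continuous section. -/
open Projectivization

noncomputable instance (n : ℕ) :
    TopologicalSpace (Projectivization ℂ (EuclideanSpace ℂ (Fin n))) :=
  inferInstanceAs
    (TopologicalSpace (Quotient (projectivizationSetoid ℂ (EuclideanSpace ℂ (Fin n)))))

/-!
A continuous section `s` picks on every nonzero `v` a vector `s [v]` with `⟪s [v], v⟫ ≠ 0`,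
depending continuously on `v` and only on the line `ℂ v`. Take independent `u₀, u₁` and
`w z = z • u₀ + (1 - ‖z‖)⁺ • u₁`: for `‖z‖ ≥ 1` all `w z` lie on the line `ℂ u₀`, so
`z ↦ ⟪s [w z], w z⟫` is a nonvanishing map of the plane equal to `c * z` on the unit circle.
Since `ℂ` is simply connected it lifts through `exp`, which would give a continuous logarithm of
`z` along the unit circle: `g (exp (θ I)) - θ I` would be a continuous lift of a constant, hence
constant, yet its values at `θ = 0` and `θ = 2π` differ by `2πi`.
-/

open Complex Set

theorem Complex.not_eqOn_sphere_const_mul {F : ℂ → ℂ} (hF : Continuous F) (hF0 : ∀ z, F z ≠ 0)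
    (c : ℂ) : ¬ EqOn F (c * ·) (Metric.sphere 0 1) := by
  intro hEq
  obtain ⟨g, -, hg⟩ := (isCoveringMapOn_exp.existsUnique_continuousMap_lifts ⟨F, hF⟩
    (a₀ := 0) (exp_log (hF0 0)) hF0).exists
  have hφ (θ : ℝ) : exp (g (exp (θ * I)) - θ * I) = c := by
    have hθ : exp (θ * I) ∈ Metric.sphere (0 : ℂ) 1 := by simp [norm_exp_ofReal_mul_I]
    rw [exp_sub, ← Function.comp_apply (f := cexp), hg, ContinuousMap.coe_mk, hEq hθ,
      mul_div_cancel_right₀ _ (exp_ne_zero _)]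
  have hconst := isCoveringMap_exp.const_of_comp (g := fun θ : ℝ ↦ g (exp (θ * I)) - θ * I)
    (by fun_prop) (fun a a' ↦ Subtype.ext (by simp only [hφ])) (2 * Real.pi) 0
  simp [exp_two_pi_mul_I] at hconst

theorem exists_inner_eq_zero_of_continuous_of_smul_invariant
    {E : Type*} [NormedAddCommGroup E] [InnerProductSpace ℂ E]
    {σ : {v : E // v ≠ 0} → E} (hσ : Continuous σ)
    (hσ_smul : ∀ (a : ℂ) (ha : a ≠ 0) (v : {v : E // v ≠ 0}),
      σ ⟨a • v, smul_ne_zero ha v.2⟩ = σ v)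
    {u₀ u₁ : E} (hu : LinearIndependent ℂ ![u₀, u₁]) :
    ∃ v, inner ℂ (σ v) (v : E) = 0 := by
  set w : ℂ → E := fun z ↦ z • u₀ + ((max (1 - ‖z‖) 0 : ℝ) : ℂ) • u₁
  have hw (z : ℂ) : w z ≠ 0 := by
    intro h
    obtain ⟨rfl, hmax⟩ := LinearIndependent.pair_iff.1 hu _ _ h
    simp at hmax
  by_contra! h0
  refine not_eqOn_sphere_const_mul (F := fun z ↦ inner ℂ (σ ⟨w z, hw z⟩) (w z))
    (by fun_prop) (fun z ↦ h0 _) (inner ℂ (σ ⟨u₀, hu.ne_zero 0⟩) u₀) fun z hz ↦ ?_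
  have hz0 : z ≠ 0 := ne_zero_of_mem_unit_sphere ⟨z, hz⟩
  have hwz : w z = z • u₀ := by simp [w, mem_sphere_zero_iff_norm.1 hz]
  simp only [hwz, hσ_smul z hz0 ⟨u₀, hu.ne_zero 0⟩, inner_smul_right]
  ring

/-- The Hopf map `h : S^{2n-1} → ℂP^{n-1}`, sending a unit vector `u ∈ ℂⁿ` to the complex
line through `u`, admits no continuous section when `n ≥ 2`. -/
theorem stmt_1 (n : ℕ) (hn : 2 ≤ n)
    (h : Metric.sphere (0 : EuclideanSpace ℂ (Fin n)) 1 →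
      Projectivization ℂ (EuclideanSpace ℂ (Fin n)))
    (hh : ∀ (u : Metric.sphere (0 : EuclideanSpace ℂ (Fin n)) 1)
      (hu : (u : EuclideanSpace ℂ (Fin n)) ≠ 0),
      h u = Projectivization.mk ℂ (u : EuclideanSpace ℂ (Fin n)) hu)
    (s : Projectivization ℂ (EuclideanSpace ℂ (Fin n)) →
      Metric.sphere (0 : EuclideanSpace ℂ (Fin n)) 1)
    (hs : Continuous s) :
    ¬ ∀ x, h (s x) = x := by
  intro hsec
  set σ : {v : EuclideanSpace ℂ (Fin n) // v ≠ 0} → EuclideanSpace ℂ (Fin n) :=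
    fun v ↦ s (mk' ℂ v)
  have hσ_smul (a : ℂ) (ha : a ≠ 0) (v : {v : EuclideanSpace ℂ (Fin n) // v ≠ 0}) :
      σ ⟨a • v, smul_ne_zero ha v.2⟩ = σ v := by
    simp only [σ, mk'_eq_mk, (mk_eq_mk_iff' ℂ _ _ _ v.2).2 ⟨a, rfl⟩]
  have hσ_inner (v : {v : EuclideanSpace ℂ (Fin n) // v ≠ 0}) : inner ℂ (σ v) (v : _) ≠ 0 := by
    obtain ⟨a, ha⟩ := (mk_eq_mk_iff ℂ _ _ (ne_zero_of_mem_unit_sphere _) v.2).1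
      ((hh _ _).symm.trans (hsec (mk' ℂ v)))
    rw [show σ v = a • v from ha.symm, Units.smul_def, inner_smul_left]
    simp [v.2]
  obtain ⟨u₁, hu⟩ := exists_linearIndependent_pair_of_one_lt_finrank (R := ℂ)
    (by rw [finrank_euclideanSpace_fin]; omega)
    ((EuclideanSpace.basisFun (Fin n) ℂ).orthonormal.ne_zero ⟨0, by omega⟩)
  obtain ⟨v, hv⟩ := exists_inner_eq_zero_of_continuous_of_smul_invariant
    (continuous_subtype_val.comp (hs.comp continuous_quotient_mk')) hσ_smul hu
  exact hσ_inner v hv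
end

section
/- A rigid domain of ℂP¹ is dense in ℂP¹: if U ⊆ ℂP¹ is a nonempty connected open set such that every holomorphic embedding f : U → ℂP¹ is the restriction of a Möbius transformation, then the closure of U is all of ℂP¹. -/
/-! If `U` is not dense it misses a disc `|z - p| < r`, so in the coordinate `w = 1 / (z - p)`
it lies in the closed disc `|w| ≤ 1 / r`, where the quadratic `w ↦ w + c w²` is injective as
soon as `|c| < r / 2`. This gives a holomorphic embedding of `U`. If it agreed with a Möbius map
on `U`, clearing denominators would give a cubic polynomial identity on an open set, hence
everywhere, and that identity forces the determinant of the Möbius map to vanish. -/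

open Set OnePoint

/-- The coordinate chart of the Riemann sphere `ℂP¹ = ℂ ∪ {∞}` adapted to a point `x`:
the identity chart near finite points, and `z ↦ 1/z` near `∞` (with junk values
elsewhere). -/
noncomputable def sphereChart (x y : OnePoint ℂ) : ℂ :=
  OnePoint.elim x (OnePoint.elim y 0 fun z => z⁻¹) (fun _ => OnePoint.elim y 0 fun z => z)

/-- The inverse of the coordinate chart adapted to `x`. -/
noncomputable def sphereChartInv (x : OnePoint ℂ) (z : ℂ) : OnePoint ℂ :=
  OnePoint.elim x (if z = 0 then (∞ : OnePoint ℂ) else ((z⁻¹ : ℂ) : OnePoint ℂ))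
    (fun _ => ((z : ℂ) : OnePoint ℂ))

/-- A map of the Riemann sphere is holomorphic on an open set `U` if it is continuous on
`U` and is analytic at each point of `U` when read in the adapted charts. -/
def SphereHolomorphicOn (f : OnePoint ℂ → OnePoint ℂ) (U : Set (OnePoint ℂ)) : Prop :=
  ContinuousOn f U ∧ ∀ x ∈ U,
    AnalyticAt ℂ (fun z : ℂ => sphereChart (f x) (f (sphereChartInv x z))) (sphereChart x x)

/-- A Möbius transformation of the Riemann sphere: `z ↦ (αz+β)/(γz+δ)` with
`αδ - βγ ≠ 0`, extended to `∞` in the usual way. -/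
def IsMobius (M : OnePoint ℂ → OnePoint ℂ) : Prop :=
  ∃ α β γ δ : ℂ, α * δ - β * γ ≠ 0 ∧
    (∀ z : ℂ, M ((z : ℂ) : OnePoint ℂ) =
      if γ * z + δ = 0 then (∞ : OnePoint ℂ)
      else (((α * z + β) / (γ * z + δ) : ℂ) : OnePoint ℂ)) ∧
    M (∞ : OnePoint ℂ) = (if γ = 0 then (∞ : OnePoint ℂ) else ((α / γ : ℂ) : OnePoint ℂ))

open Filter Topology Metric

-- At `x = p` this takes the junk value `0⁻¹ = 0`.
noncomputable def invSub (p : ℂ) (x : OnePoint ℂ) : ℂ :=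
  OnePoint.elim x 0 fun z => (z - p)⁻¹

@[simp] lemma invSub_coe (p z : ℂ) : invSub p z = (z - p)⁻¹ := rfl

@[simp] lemma invSub_infty (p : ℂ) : invSub p ∞ = 0 := rfl

lemma continuousOn_invSub (p : ℂ) : ContinuousOn (invSub p) {(p : OnePoint ℂ)}ᶜ := by
  intro x hx
  refine ContinuousAt.continuousWithinAt ?_
  induction x using OnePoint.rec with
  | infty =>
    rw [OnePoint.continuousAt_infty', coclosedCompact_eq_cocompact, ← cobounded_eq_cocompact]
    exact tendsto_inv₀_cobounded.comp (tendsto_sub_const_cobounded p)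
  | coe z =>
    have hzp : z - p ≠ 0 := sub_ne_zero.2 fun h => hx (by rw [h]; rfl)
    rw [OnePoint.continuousAt_coe]
    exact (continuous_sub_right p).continuousAt.inv₀ hzp

lemma injOn_invSub (p : ℂ) : InjOn (invSub p) {(p : OnePoint ℂ)}ᶜ := by
  have hne : ∀ z : ℂ, (z : OnePoint ℂ) ≠ p → (z - p)⁻¹ ≠ 0 := fun z hz =>
    inv_ne_zero (sub_ne_zero.2 fun h => hz (by rw [h]))
  intro x hx y hy h
  induction x using OnePoint.rec <;> induction y using OnePoint.rec
  · rfl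
  · exact absurd h.symm (hne _ hy)
  · exact absurd h (hne _ hx)
  · simpa using h

lemma analyticAt_invSub_comp_sphereChartInv {p : ℂ} {x : OnePoint ℂ} (hx : x ≠ p) :
    AnalyticAt ℂ (invSub p ∘ sphereChartInv x) (sphereChart x x) := by
  cases x with
  | infty =>
    -- valid for every `w`, including `w = 0` and `w = p⁻¹`, because `0⁻¹ = 0`
    have hchart : invSub p ∘ sphereChartInv ∞ = fun w => w * (1 - p * w)⁻¹ := by
      funext w
      by_cases hw : w = 0
      · simp [sphereChartInv, hw]
      · have : w⁻¹ - p = (1 - p * w) * w⁻¹ := by field_simp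
        simp [sphereChartInv, hw, this, mul_comm]
    rw [hchart]
    exact analyticAt_id.mul ((analyticAt_const.sub (analyticAt_const.mul analyticAt_id)).inv
      (by simp [sphereChart]))
  | coe z =>
    have hzp : z - p ≠ 0 := sub_ne_zero.2 fun h => hx (by rw [h])
    have hchart : invSub p ∘ sphereChartInv z = fun w => (w - p)⁻¹ := by
      funext w
      simp [sphereChartInv]
    rw [hchart]
    simpa [sphereChart] using (by fun_prop (disch := exact hzp) :
      AnalyticAt ℂ (fun w : ℂ => (w - p)⁻¹) z)

lemma sphereHolomorphicOn_coe_comp {g : OnePoint ℂ → ℂ} {U : Set (OnePoint ℂ)}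
    (hcont : ContinuousOn g U)
    (hanalytic : ∀ x ∈ U, AnalyticAt ℂ (g ∘ sphereChartInv x) (sphereChart x x)) :
    SphereHolomorphicOn (fun x => (g x : OnePoint ℂ)) U :=
  -- `sphereChart` is the identity between finite points
  ⟨OnePoint.continuous_coe.comp_continuousOn hcont, hanalytic⟩

lemma injOn_add_mul_sq {𝕜 : Type*} [NormedField 𝕜] {c : 𝕜} {R : ℝ} (hcR : ‖c‖ * R < 1 / 2) :
    InjOn (fun w : 𝕜 => w + c * w ^ 2) (closedBall 0 R) := by
  intro a ha b hb hab
  have hfactor : (a - b) * (1 + c * (a + b)) = 0 := by linear_combination hab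
  refine sub_eq_zero.1 ((mul_eq_zero.1 hfactor).resolve_right fun h => ?_)
  rw [mem_closedBall_zero_iff] at ha hb
  have hone : ‖c * (a + b)‖ = 1 := by rw [eq_neg_of_add_eq_zero_right h, norm_neg, norm_one]
  have : ‖c * (a + b)‖ ≤ ‖c‖ * (R + R) := by
    rw [norm_mul]
    exact mul_le_mul_of_nonneg_left ((norm_add_le a b).trans (add_le_add ha hb)) (norm_nonneg c)
  linarith

noncomputable def invSubQuad (p c : ℂ) (x : OnePoint ℂ) : OnePoint ℂ :=
  ((invSub p x + c * invSub p x ^ 2 : ℂ) : OnePoint ℂ)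

lemma sphereHolomorphicOn_invSubQuad {p : ℂ} (c : ℂ) {U : Set (OnePoint ℂ)}
    (hp : (p : OnePoint ℂ) ∉ U) : SphereHolomorphicOn (invSubQuad p c) U := by
  have hU : U ⊆ {(p : OnePoint ℂ)}ᶜ := fun x hx (h : x = p) => hp (h ▸ hx)
  refine sphereHolomorphicOn_coe_comp (g := fun x => invSub p x + c * invSub p x ^ 2) ?_ ?_
  · have := (continuousOn_invSub p).mono hU
    fun_prop
  · intro x hx
    have hq : AnalyticAt ℂ (fun w : ℂ => w + c * w ^ 2) ((invSub p ∘ sphereChartInv x)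
        (sphereChart x x)) := by fun_prop
    exact hq.comp (analyticAt_invSub_comp_sphereChartInv (hU hx))

lemma injOn_invSubQuad {p c : ℂ} {r : ℝ} {U : Set (OnePoint ℂ)} (hr : 0 < r)
    (hU : ∀ z : ℂ, (z : OnePoint ℂ) ∈ U → r ≤ ‖z - p‖) (hc : ‖c‖ * r⁻¹ < 1 / 2) :
    InjOn (invSubQuad p c) U := by
  have hpU : U ⊆ {(p : OnePoint ℂ)}ᶜ := fun x hx (h : x = p) => by
    simpa using (hU p (h ▸ hx)).trans_lt' hr
  have hmaps : MapsTo (invSub p) U (closedBall 0 r⁻¹) := by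
    intro x hx
    induction x using OnePoint.rec with
    | infty => simp [hr.le]
    | coe z => simpa using inv_anti₀ hr (hU z hx)
  exact (OnePoint.coe_injective.injOn).comp
    ((injOn_add_mul_sq hc).comp (injOn_invSub p |>.mono hpU) hmaps) (mapsTo_univ _ _)

lemma det_eq_zero_of_forall_mul_sub_sq_eq {α β γ δ p c : ℂ} (hc : c ≠ 0)
    (h : ∀ z, (α * z + β) * (z - p) ^ 2 = (z - p + c) * (γ * z + δ)) :
    α * δ - β * γ = 0 := by
  have hδ : γ * p + δ = 0 := (mul_eq_zero.1 (by linear_combination -h p)).resolve_left hc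
  have e₁ : α * p + α + β = γ + c * γ := by linear_combination h (p + 1) + (1 + c) * hδ
  have e₂ : α * p - α + β = γ - c * γ := by linear_combination h (p - 1) + (c - 1) * hδ
  have e₃ : 4 * (α * p) + 8 * α + 4 * β = 4 * γ + 2 * c * γ := by
    linear_combination h (p + 2) + (2 + c) * hδ
  have hγ : γ = 0 := by
    have : c * γ = 0 := by linear_combination (e₃ - 6 * e₁ + 2 * e₂) / 6
    exact (mul_eq_zero.1 this).resolve_left hc
  have hα : α = 0 := by linear_combination e₁ / 2 - e₂ / 2 + c * hγ
  have hδ' : δ = 0 := by linear_combination hδ - p * hγ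
  rw [hα, hγ, hδ']
  ring

lemma not_eqOn_invSubQuad_of_isMobius {p c : ℂ} (hc : c ≠ 0) {U : Set (OnePoint ℂ)}
    (hU : IsOpen U) (hp : (p : OnePoint ℂ) ∉ U) {z₀ : ℂ} (hz₀ : (z₀ : OnePoint ℂ) ∈ U)
    {M : OnePoint ℂ → OnePoint ℂ} (hM : IsMobius M) : ¬ EqOn (invSubQuad p c) M U := by
  obtain ⟨α, β, γ, δ, hdet, hM, -⟩ := hM
  intro hEq
  have hpoint : ∀ z : ℂ, (z : OnePoint ℂ) ∈ U →
      (α * z + β) * (z - p) ^ 2 = (z - p + c) * (γ * z + δ) := by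
    intro z hz
    have hzp : z - p ≠ 0 := sub_ne_zero.2 fun h => hp (h ▸ hz)
    have hfz := hEq hz
    rw [hM z] at hfz
    split_ifs at hfz with hγδ
    · exact absurd hfz (OnePoint.coe_ne_infty _)
    · have := OnePoint.coe_injective hfz
      simp only [invSub_coe] at this
      rw [eq_div_iff hγδ] at this
      field_simp at this
      linear_combination -this
  have hV : (↑) ⁻¹' U ∈ 𝓝 z₀ := (hU.preimage OnePoint.continuous_coe).mem_nhds hz₀
  have hglobal := AnalyticOnNhd.eq_of_eventuallyEq (𝕜 := ℂ)
    (fun _ _ => by fun_prop) (fun _ _ => by fun_prop) (Filter.mem_of_superset hV hpoint)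
  exact hdet (det_eq_zero_of_forall_mul_sub_sq_eq hc (congrFun hglobal))

lemma exists_forall_le_norm_sub_of_closure_ne_univ {U : Set (OnePoint ℂ)}
    (h : closure U ≠ univ) : ∃ p : ℂ, ∃ r > 0, ∀ z : ℂ, (z : OnePoint ℂ) ∈ U → r ≤ ‖z - p‖ := by
  have hopen : IsOpen (closure U)ᶜ := isClosed_closure.isOpen_compl
  obtain ⟨p, hp⟩ := OnePoint.denseRange_coe.exists_mem_open hopen (nonempty_compl.2 h)
  obtain ⟨r, hr, hball⟩ := Metric.isOpen_iff.1 (hopen.preimage OnePoint.continuous_coe) p hp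
  refine ⟨p, r, hr, fun z hz => not_lt.1 fun hlt => ?_⟩
  exact hball (mem_ball_iff_norm.2 hlt) (subset_closure hz)

theorem stmt_9_general (U : Set (OnePoint ℂ)) (hU : IsOpen U) (hne : U.Nonempty)
    (hrigid : ∀ f : OnePoint ℂ → OnePoint ℂ, SphereHolomorphicOn f U → Set.InjOn f U →
      ∃ M : OnePoint ℂ → OnePoint ℂ, IsMobius M ∧ Set.EqOn f M U) :
    closure U = Set.univ := by
  by_contra hdense
  obtain ⟨p, r, hr, hfar⟩ := exists_forall_le_norm_sub_of_closure_ne_univ hdense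
  obtain ⟨z₀, hz₀⟩ := OnePoint.denseRange_coe.exists_mem_open hU hne
  have hp : (p : OnePoint ℂ) ∉ U := fun h => (hfar p h).not_gt (by simpa using hr)
  set c : ℂ := ((r / 4 : ℝ) : ℂ)
  have hc : ‖c‖ * r⁻¹ < 1 / 2 := by
    rw [Complex.norm_of_nonneg (by positivity), div_mul_eq_mul_div, mul_inv_cancel₀ hr.ne']
    norm_num
  have hc₀ : c ≠ 0 := Complex.ofReal_ne_zero.2 (by positivity)
  obtain ⟨M, hM, hfM⟩ :=
    hrigid _ (sphereHolomorphicOn_invSubQuad c hp) (injOn_invSubQuad hr hfar hc)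
  exact not_eqOn_invSubQuad_of_isMobius hc₀ hU hp hz₀ hM hfM

/-- A rigid domain of `ℂP¹` — a nonempty connected open set all of whose holomorphic
embeddings into `ℂP¹` are restrictions of Möbius transformations — is dense in `ℂP¹`. -/
theorem stmt_9 (U : Set (OnePoint ℂ)) (hU : IsOpen U) (hne : U.Nonempty)
    (hconn : IsConnected U)
    (hrigid : ∀ f : OnePoint ℂ → OnePoint ℂ, SphereHolomorphicOn f U → Set.InjOn f U →
      ∃ M : OnePoint ℂ → OnePoint ℂ, IsMobius M ∧ Set.EqOn f M U) :
    closure U = Set.univ :=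
  stmt_9_general U hU hne hrigid
end
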